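/- Let K be a closed nowhere dense subset of ω*. Then there exists a transitive group G of permutations of ω such that every ultrafilter q ∈ K is fixed by every g ∈ G (so Gq = {q}), while for every p ∈ ω* \ K the orbit Gp is dense in ω*. -/

import Mathlib

open Set

/-- A coarse structure on a set `X`. -/
structure CoarseStructure (X : Type*) where
  sets : Set (Set (X × X))
  diagonal_mem : ∀ E ∈ sets, ∀ x : X, (x, x) ∈ E
  comp_mem : ∀ E ∈ sets, ∀ E' ∈ sets,
    {q : X × X | ∃ z : X, (q.1, z) ∈ E ∧ (z, q.2) ∈ E'} ∈ sets
  inv_mem : ∀ E ∈ sets, {q : X × X | (q.2, q.1) ∈ E} ∈ sets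
  subset_mem : ∀ E ∈ sets, ∀ E', E' ⊆ E → (∀ x : X, (x, x) ∈ E') → E' ∈ sets
  covers : ⋃₀ sets = Set.univ

/-- The ball `E[A]`. -/
def ball {X : Type*} (E : Set (X × X)) (A : Set X) : Set X := {y | ∃ a ∈ A, (a, y) ∈ E}

/-- A bounded subset of a coarse space. -/
def CoarseStructure.Bounded {X : Type*} (C : CoarseStructure X) (B : Set X) : Prop :=
  ∃ E ∈ C.sets, ∃ x : X, B ⊆ ball E {x}

/-- A finitary coarse space: uniformly finite balls. -/
def CoarseStructure.Finitary {X : Type*} (C : CoarseStructure X) : Prop :=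
  ∀ E ∈ C.sets, ∃ n : ℕ, ∀ x : X, (ball E {x}).Finite ∧ (ball E {x}).ncard < n

/-- The set `X^♯` of ultrafilters all of whose members are unbounded. -/
def CoarseStructure.Sharp {X : Type*} (C : CoarseStructure X) : Set (Ultrafilter X) :=
  {p | ∀ P ∈ p, ¬ C.Bounded P}

/-- The parallelity relation on ultrafilters. -/
def CoarseStructure.Parallel {X : Type*} (C : CoarseStructure X) (p q : Ultrafilter X) : Prop :=
  ∃ E ∈ C.sets, ∀ P ∈ p, ball E P ∈ q

/-- The entourage determined by a set of permutations. -/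
def entourage {X : Type*} (F : Set (Equiv.Perm X)) : Set (X × X) :=
  {q | ∃ g ∈ F, q.2 = g q.1}

/-- The finitary coarse structure `X_G` determined by a group `G` of permutations of `X`:
its entourages are the diagonal-containing subsets of `{(x,gx) : x ∈ X, g ∈ F}`
for finite `F ⊆ G` with `id ∈ F`. -/
def XGsets {X : Type*} (G : Subgroup (Equiv.Perm X)) : Set (Set (X × X)) :=
  {E | (∀ x : X, (x, x) ∈ E) ∧ ∃ F : Finset (Equiv.Perm X),
    (1 : Equiv.Perm X) ∈ F ∧ ↑F ⊆ (G : Set (Equiv.Perm X)) ∧ E ⊆ entourage ↑F}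

/-- A free ultrafilter. -/
def IsFree {X : Type*} (p : Ultrafilter X) : Prop := (p : Filter X) ≤ Filter.cofinite

/-- `X*`, the space of free ultrafilters with the Stone topology. -/
def FreeUF (X : Type*) : Type _ := {p : Ultrafilter X // IsFree p}

instance (X : Type*) : TopologicalSpace (FreeUF X) :=
  instTopologicalSpaceSubtype

/-- The orbit `Gp` of an ultrafilter under the induced action `gp = {gP : P ∈ p}`. -/
def ufOrbit {X : Type*} (G : Subgroup (Equiv.Perm X)) (p : Ultrafilter X) :
    Set (Ultrafilter X) :=
  {q | ∃ g ∈ G, q = Ultrafilter.map (⇑g) p}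

/-- The `p`-companion `Δ_p(A) = A* ∩ Gp`. -/
def compan {X : Type*} (G : Subgroup (Equiv.Perm X)) (p : Ultrafilter X) (A : Set X) :
    Set (Ultrafilter X) :=
  {q | A ∈ q ∧ q ∈ ufOrbit G p}

/-- Large subsets of `X_G`. -/
def IsLarge {X : Type*} (G : Subgroup (Equiv.Perm X)) (A : Set X) : Prop :=
  ∃ E ∈ XGsets G, ball E A = Set.univ

/-- Thick subsets of `X_G`. -/
def IsThick {X : Type*} (G : Subgroup (Equiv.Perm X)) (A : Set X) : Prop :=
  ∀ E ∈ XGsets G, ∃ a ∈ A, ball E {a} ⊆ A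

/-- Thin (discrete) subsets of `X_G`. -/
def IsThin {X : Type*} (G : Subgroup (Equiv.Perm X)) (A : Set X) : Prop :=
  ∀ E ∈ XGsets G, ∃ B : Set X, B.Finite ∧ ∀ a ∈ A \ B, ball E {a} ∩ A = {a}

/-- Sparse subsets of `X_G`. -/
def IsSparse {X : Type*} (G : Subgroup (Equiv.Perm X)) (A : Set X) : Prop :=
  ∀ p : Ultrafilter X, IsFree p → (compan G p A).Finite

/-- Scattered subsets of `X_G`. -/
def IsScattered {X : Type*} (G : Subgroup (Equiv.Perm X)) (A : Set X) : Prop :=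
  ∀ Y ⊆ A, Y.Infinite →
    ∃ p : Ultrafilter X, IsFree p ∧ Y ∈ p ∧ (compan G p Y).Finite

/-- Close subsets of a coarse space. -/
def CoarseStructure.Close {X : Type*} (C : CoarseStructure X) (A B : Set X) : Prop :=
  ∃ E ∈ C.sets, A ⊆ ball E B ∧ B ⊆ ball E A

/-- Close subsets of `X_G`. -/
def CloseG {X : Type*} (G : Subgroup (Equiv.Perm X)) (A B : Set X) : Prop :=
  ∃ E ∈ XGsets G, A ⊆ ball E B ∧ B ⊆ ball E A

/-- Linked subsets of `X_G`. -/
def LinkedG {X : Type*} (G : Subgroup (Equiv.Perm X)) (A B : Set X) : Prop :=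
  (A.Finite ∧ B.Finite) ∨
    ∃ A' ⊆ A, ∃ B' ⊆ B, A'.Infinite ∧ B'.Infinite ∧ CloseG G A' B'


open Set

/-- The `n`-th block `{g_0^{ε_0} ⋯ g_n^{ε_n} x_n : ε_i ∈ {0,1}}`. -/
def pwBlock {X : Type*} (g : ℕ → Equiv.Perm X) (x : ℕ → X) (n : ℕ) : Set X :=
  {y | ∃ ε : Fin (n + 1) → Bool,
    y = ((List.ofFn fun i : Fin (n + 1) =>
      (g i) ^ (if ε i then 1 else 0)).prod : Equiv.Perm X) (x n)}

/-- A piece-wise shifted FP-set determined by the group `G`. -/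
def IsPWShiftedFP {X : Type*} (G : Subgroup (Equiv.Perm X)) (Y : Set X) : Prop :=
  ∃ g : ℕ → Equiv.Perm X, ∃ x : ℕ → X,
    (∀ n, g n ∈ G) ∧
    (∀ m n, m ≠ n → Disjoint (pwBlock g x m) (pwBlock g x n)) ∧
    (∀ n, (pwBlock g x n).ncard = 2 ^ (n + 1)) ∧
    Y = ⋃ n, pwBlock g x n

/-- The group of all self-homeomorphisms of a topological space, as a subgroup
of the permutation group. -/
def homeoSubgroup (X : Type*) [TopologicalSpace X] : Subgroup (Equiv.Perm X) where
  carrier := {g | Continuous g ∧ Continuous g.symm}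
  one_mem' := ⟨continuous_id, continuous_id⟩
  mul_mem' := by
    rintro a b ⟨ha1, ha2⟩ ⟨hb1, hb2⟩
    refine ⟨?_, ?_⟩
    · simpa [Equiv.Perm.mul_def, Equiv.coe_trans] using ha1.comp hb1
    · simpa [Equiv.Perm.mul_def, Equiv.symm_trans_apply] using (hb2.comp ha2 : _)
  inv_mem' := by
    rintro a ⟨ha1, ha2⟩
    exact ⟨ha2, ha1⟩


/-- The parallelity relation on ultrafilters over the coarse space `X_G`. -/
def ParallelG {X : Type*} (G : Subgroup (Equiv.Perm X)) (p q : Ultrafilter X) : Prop :=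
  ∃ E ∈ XGsets G, ∀ P ∈ p, ball E P ∈ q

/-- Linked subsets of a coarse space. -/
def CoarseStructure.Linked {X : Type*} (C : CoarseStructure X) (A B : Set X) : Prop :=
  (C.Bounded A ∧ C.Bounded B) ∨
    ∃ A' ⊆ A, ∃ B' ⊆ B, ¬ C.Bounded A' ∧ ¬ C.Bounded B' ∧ C.Close A' B'

/-- The orbit `Gp` viewed as a subset of the space `X*` of free ultrafilters. -/
def freeOrbit {X : Type*} (G : Subgroup (Equiv.Perm X)) (p : Ultrafilter X) :
    Set (FreeUF X) :=
  {q | q.1 ∈ ufOrbit G p}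

/-! The group consists of the permutations that fix pointwise some set `B` lying in every
ultrafilter of `K`; such a permutation fixes each `q ∈ K`, and the group is transitive
because `K ⊆ ω*` consists of free ultrafilters, so every transposition belongs to it.
For density, fix `p ∉ K` and a nonempty basic set `A*`. As `K` is nowhere dense there is
`r ∈ A* \ K`, and as `K` is closed there are `B₀, B₁` in every ultrafilter of `K` with
`B₀ᶜ ∈ p` and `B₁ᶜ ∈ r`. Outside `B = B₀ ∩ B₁` there is room to move a set `P ∈ p`
into an infinite `T ⊆ A` by a permutation fixing `B` pointwise, and that permutation
sends `p` into `A*`. -/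

open Filter TopologicalSpace

section

variable {X : Type*}

theorem IsFree.infinite_of_mem {p : Ultrafilter X} (hp : IsFree p) {A : Set X} (hA : A ∈ p) :
    A.Infinite :=
  fun hfin => Ultrafilter.compl_notMem_iff.2 hA (hp hfin.compl_mem_cofinite)

theorem exists_isFree_mem {A : Set X} (hA : A.Infinite) : ∃ p : Ultrafilter X, IsFree p ∧ A ∈ p :=
  haveI := hA.cofinite_inf_principal_neBot
  ⟨.of (cofinite ⊓ 𝓟 A), (Ultrafilter.of_le _).trans inf_le_left,
    (Ultrafilter.of_le _).trans inf_le_right (mem_principal_self A)⟩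

theorem IsFree.map {p : Ultrafilter X} (hp : IsFree p) (g : Equiv.Perm X) :
    IsFree (Ultrafilter.map g p) :=
  (Filter.map_mono hp).trans g.injective.tendsto_cofinite

theorem Ultrafilter.map_eq_self_of_eventually_eq {g : X → X} {q : Ultrafilter X}
    (h : ∀ᶠ x in q, g x = x) : Ultrafilter.map g q = q :=
  Ultrafilter.coe_injective <| by simpa using Filter.map_congr h

theorem isTopologicalBasis_freeUF :
    IsTopologicalBasis (Set.range fun A : Set X => {p : FreeUF X | A ∈ p.1}) := by
  have := ultrafilterBasis_is_basis.induced (Subtype.val : FreeUF X → Ultrafilter X)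
  rwa [ultrafilterBasis, ← Set.range_comp] at this

/-- The filter `φ` with `K = ⋂ {A* : A ∈ φ}` when `K` is closed. -/
def kernelFilter (K : Set (FreeUF X)) : Filter X := ⨆ q ∈ K, (q.1 : Filter X)

theorem mem_kernelFilter {K : Set (FreeUF X)} {A : Set X} :
    A ∈ kernelFilter K ↔ ∀ q ∈ K, A ∈ q.1 := by
  simp only [kernelFilter, mem_iSup, Ultrafilter.mem_coe]

theorem kernelFilter_le_cofinite (K : Set (FreeUF X)) : kernelFilter K ≤ cofinite :=
  iSup₂_le fun q _ => q.2

theorem le_kernelFilter {K : Set (FreeUF X)} {q : FreeUF X} (hq : q ∈ K) :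
    (q.1 : Filter X) ≤ kernelFilter K :=
  le_iSup₂ (f := fun q (_ : q ∈ K) => (q.1 : Filter X)) q hq

theorem IsClosed.exists_mem_kernelFilter_compl_mem {K : Set (FreeUF X)} (hK : IsClosed K)
    {r : FreeUF X} (hr : r ∉ K) : ∃ B ∈ kernelFilter K, Bᶜ ∈ r.1 := by
  obtain ⟨_, ⟨A, rfl⟩, hrA, hAK⟩ :=
    isTopologicalBasis_freeUF.exists_subset_of_mem_open hr hK.isOpen_compl
  refine ⟨Aᶜ, mem_kernelFilter.2 fun q hq => ?_, by rwa [compl_compl]⟩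
  exact Ultrafilter.compl_mem_iff_notMem.2 fun hAq => hAK hAq hq

theorem exists_mem_notMem_of_interior_eq_empty {K : Set (FreeUF X)} (hK : interior K = ∅)
    {A : Set X} (hA : A.Infinite) : ∃ r : FreeUF X, A ∈ r.1 ∧ r ∉ K := by
  obtain ⟨p, hp, hAp⟩ := exists_isFree_mem hA
  by_contra! hAK
  have hopen : IsOpen {r : FreeUF X | A ∈ r.1} := isTopologicalBasis_freeUF.isOpen ⟨A, rfl⟩
  have hsub : {r : FreeUF X | A ∈ r.1} ⊆ interior K := interior_maximal hAK hopen
  rw [hK] at hsub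
  exact hsub (show (⟨p, hp⟩ : FreeUF X) ∈ {r : FreeUF X | A ∈ r.1} from hAp)

def fixingGroup (φ : Filter X) : Subgroup (Equiv.Perm X) where
  carrier := {g | ∀ᶠ x in φ, g x = x}
  one_mem' := Eventually.of_forall fun _ => rfl
  mul_mem' {a b} ha hb := (ha.and hb).mono fun x hx => by
    simp only [Equiv.Perm.mul_apply, hx.2, hx.1]
  inv_mem' {a} ha := ha.mono fun x hx => Equiv.Perm.inv_eq_iff_eq.2 hx.symm

theorem swap_mem_fixingGroup [DecidableEq X] {φ : Filter X} (hφ : φ ≤ cofinite) (x y : X) :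
    Equiv.swap x y ∈ fixingGroup φ :=
  hφ <| ((eventually_cofinite_ne x).and (eventually_cofinite_ne y)).mono fun _ hz =>
    Equiv.swap_apply_of_ne_of_ne hz.1 hz.2

theorem Ultrafilter.map_eq_self_of_mem_fixingGroup {φ : Filter X} {q : Ultrafilter X}
    (hq : (q : Filter X) ≤ φ) {g : Equiv.Perm X} (hg : g ∈ fixingGroup φ) :
    Ultrafilter.map g q = q :=
  Ultrafilter.map_eq_self_of_eventually_eq (hq hg)

theorem Set.Infinite.exists_subset_infinite_diff {A : Set X} (hA : A.Infinite) :
    ∃ T ⊆ A, T.Infinite ∧ (A \ T).Infinite := by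
  set e : ℕ → X := fun n => hA.natEmbedding _ n
  have he : Function.Injective e := fun _ _ h => (hA.natEmbedding _).injective (Subtype.ext h)
  have heA : ∀ n, e n ∈ A := fun n => (hA.natEmbedding _ n).2
  refine ⟨Set.range fun n => e (2 * n), Set.range_subset_iff.2 fun n => heA _,
    Set.infinite_range_of_injective (he.comp fun _ _ h => by omega), ?_⟩
  refine Set.infinite_of_injective_forall_mem (f := fun n => e (2 * n + 1))
    (he.comp fun _ _ h => by omega) fun n => ⟨heA _, ?_⟩
  rintro ⟨m, hm⟩
  have := he hm
  omega

theorem IsFree.exists_mem_subset_infinite_diff {p : Ultrafilter X} (hp : IsFree p) {C : Set X}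
    (hC : C ∈ p) : ∃ P ∈ p, P ⊆ C ∧ (C \ P).Infinite := by
  obtain ⟨S, hSC, hS, hCS⟩ := (hp.infinite_of_mem hC).exists_subset_infinite_diff
  by_cases hSp : S ∈ p
  · exact ⟨S, hSp, hSC, hCS⟩
  · refine ⟨C \ S, inter_mem hC (Ultrafilter.compl_mem_iff_notMem.2 hSp), Set.sdiff_subset, ?_⟩
    rwa [Set.sdiff_sdiff_cancel_left hSC]

variable [Countable X]

theorem exists_perm_mapsTo {s t : Set X} (hs : s.Infinite) (hs' : sᶜ.Infinite)
    (ht : t.Infinite) (ht' : tᶜ.Infinite) : ∃ σ : Equiv.Perm X, Set.MapsTo σ s t := by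
  classical
  have := hs.to_subtype
  have := hs'.to_subtype
  have := ht.to_subtype
  have := ht'.to_subtype
  obtain ⟨e₁⟩ : Nonempty (s ≃ t) := nonempty_equiv_of_countable
  obtain ⟨e₂⟩ : Nonempty (↥sᶜ ≃ ↥tᶜ) := nonempty_equiv_of_countable
  refine ⟨(Equiv.Set.sumCompl s).symm.trans ((e₁.sumCongr e₂).trans (Equiv.Set.sumCompl t)),
    fun x hx => ?_⟩
  simp [Equiv.Set.sumCompl_symm_apply_of_mem hx]

theorem exists_perm_fixing_compl_mapsTo {C P T : Set X} (hPC : P ⊆ C) (hTC : T ⊆ C)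
    (hP : P.Infinite) (hCP : (C \ P).Infinite) (hT : T.Infinite) (hCT : (C \ T).Infinite) :
    ∃ g : Equiv.Perm X, (∀ x ∉ C, g x = x) ∧ Set.MapsTo g P T := by
  classical
  have infinite_restrict : ∀ {S : Set X}, (C ∩ S).Infinite →
      (Subtype.val ⁻¹' S : Set C).Infinite := fun hS =>
    Set.Infinite.of_image Subtype.val (by rwa [Subtype.image_preimage_coe])
  obtain ⟨σ, hσ⟩ := exists_perm_mapsTo (s := Subtype.val ⁻¹' P) (t := Subtype.val ⁻¹' T)
    (infinite_restrict (by rwa [Set.inter_eq_right.2 hPC])) (infinite_restrict hCP)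
    (infinite_restrict (by rwa [Set.inter_eq_right.2 hTC])) (infinite_restrict hCT)
  refine ⟨σ.subtypeCongr (Equiv.refl _), fun x hx => ?_, fun x hx => ?_⟩
  · rw [Equiv.Perm.subtypeCongr.right_apply _ _ hx, Equiv.refl_apply]
  · rw [Equiv.Perm.subtypeCongr.left_apply _ _ (hPC hx)]
    exact hσ (show (⟨x, hPC hx⟩ : C) ∈ Subtype.val ⁻¹' P from hx)

variable {K : Set (FreeUF X)}

theorem exists_mem_fixingGroup_mem_map (hK : IsClosed K) (hKint : interior K = ∅)
    {p : FreeUF X} (hp : p ∉ K) {A : Set X} (hA : A.Infinite) :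
    ∃ g ∈ fixingGroup (kernelFilter K), A ∈ Ultrafilter.map g p.1 := by
  obtain ⟨B₀, hB₀K, hB₀p⟩ := hK.exists_mem_kernelFilter_compl_mem hp
  obtain ⟨r, hAr, hr⟩ := exists_mem_notMem_of_interior_eq_empty hKint hA
  obtain ⟨B₁, hB₁K, hB₁r⟩ := hK.exists_mem_kernelFilter_compl_mem hr
  set C := (B₀ ∩ B₁)ᶜ
  have hCp : C ∈ p.1 := mem_of_superset hB₀p (Set.compl_subset_compl.2 Set.inter_subset_left)
  obtain ⟨P, hPp, hPC, hCP⟩ := p.2.exists_mem_subset_infinite_diff hCp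
  obtain ⟨T, hTA, hT, hAT⟩ :=
    (r.2.infinite_of_mem (inter_mem hAr hB₁r)).exists_subset_infinite_diff
  have hTC : T ⊆ C := fun x hx hxB => (hTA hx).2 hxB.2
  obtain ⟨g, hgC, hgPT⟩ := exists_perm_fixing_compl_mapsTo hPC hTC (p.2.infinite_of_mem hPp)
    hCP hT (hAT.mono (Set.sdiff_subset_sdiff_left fun _ hx hxB => hx.2 hxB.2))
  refine ⟨g, mem_of_superset (inter_mem hB₀K hB₁K) fun x hx => hgC x (not_not_intro hx), ?_⟩
  exact Ultrafilter.mem_map.2 (mem_of_superset hPp fun x hx => (hTA (hgPT hx)).1)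

theorem dense_freeOrbit_fixingGroup (hK : IsClosed K) (hKint : interior K = ∅)
    {p : FreeUF X} (hp : p ∉ K) : Dense (freeOrbit (fixingGroup (kernelFilter K)) p.1) := by
  refine isTopologicalBasis_freeUF.dense_iff.2 ?_
  rintro _ ⟨A, rfl⟩ ⟨q, hAq⟩
  obtain ⟨g, hg, hAg⟩ := exists_mem_fixingGroup_mem_map hK hKint hp (q.2.infinite_of_mem hAq)
  exact ⟨⟨_, p.2.map g⟩, hAg, g, hg, rfl⟩

end

/-- For every closed nowhere dense `K ⊆ ω*` there is a transitive group
`G` of permutations of `ω` fixing every ultrafilter of `K`, such that the orbit of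
every free ultrafilter outside `K` is dense in `ω*`. -/
theorem kernel_prescribed (K : Set (FreeUF ℕ)) (hK : IsClosed K)
    (hnd : interior (closure K) = ∅) :
    ∃ G : Subgroup (Equiv.Perm ℕ),
      (∀ x y : ℕ, ∃ g ∈ G, g x = y) ∧
      (∀ q ∈ K, ∀ g ∈ G, Ultrafilter.map (⇑g) (q : FreeUF ℕ).1 = (q : FreeUF ℕ).1) ∧
      (∀ p : FreeUF ℕ, p ∉ K → Dense (freeOrbit G p.1)) :=
  ⟨fixingGroup (kernelFilter K),
    fun x y => ⟨_, swap_mem_fixingGroup (kernelFilter_le_cofinite K) x y,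
      Equiv.swap_apply_left x y⟩,
    fun _ hq _ hg => Ultrafilter.map_eq_self_of_mem_fixingGroup (le_kernelFilter hq) hg,
    fun _ hp => dense_freeOrbit_fixingGroup hK
      (Set.subset_eq_empty (interior_mono subset_closure) hnd) hp⟩
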